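/- For a tree interpolation problem encoded from a disjunctive interpolation problem by introducing fresh Boolean variables a_p and labels φ_L(p) = ¬a_p ∨ (φ[q₁/a_{q₁},…,qₙ/a_{qₙ}])↓p for non-root positions (and φ_L(root) = φ[q₁/a_{q₁},…,qₙ/a_{qₙ}]), the conjunction ⋀_{p∈pos} φ_L(p) is unsatisfiable whenever φ is unsatisfiable. -/
import Mathlib


namespace Stmt19

/-- Positions: paths in the formula tree (`true` = left, `false` = right). -/
abbrev Pos := List Bool

/-- Formulae built from ∧, ∨ and atoms; to express the encoding, atoms may
depend both on the first-order assignment (V → U s) and on an assignment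
β of truth values to the fresh Boolean variables a_p (indexed by
positions p). -/
inductive Fml2 (S V : Type) (U : S → Type) : Type
  | atom (f : (s : S) → (V → U s) → (Pos → Prop) → Prop)
  | tr
  | fls
  | and (l r : Fml2 S V U)
  | or (l r : Fml2 S V U)

variable {S V : Type} {U : S → Type}

def eval2 : Fml2 S V U → (s : S) → (V → U s) → (Pos → Prop) → Prop
  | .atom f, s, α, β => f s α β
  | .tr, _, _, _ => True
  | .fls, _, _, _ => False
  | .and l r, s, α, β => eval2 l s α β ∧ eval2 r s α β
  | .or l r, s, α, β => eval2 l s α β ∨ eval2 r s α β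

def subAt : Fml2 S V U → Pos → Option (Fml2 S V U)
  | F, [] => some F
  | .and l r, b :: p => subAt (if b then l else r) p
  | .or l r, b :: p => subAt (if b then l else r) p
  | _, _ :: _ => none

/-- Simultaneous (outermost-first) substitution of formulas at the positions
given by σ; `cur` is the current path. -/
def msubstAux (σ : Pos → Option (Fml2 S V U)) : Pos → Fml2 S V U → Fml2 S V U
  | cur, .and l r =>
      match σ cur with
      | some ψ => ψ
      | none => .and (msubstAux σ (cur ++ [true]) l) (msubstAux σ (cur ++ [false]) r)
  | cur, .or l r =>
      match σ cur with
      | some ψ => ψ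
      | none => .or (msubstAux σ (cur ++ [true]) l) (msubstAux σ (cur ++ [false]) r)
  | cur, F =>
      match σ cur with
      | some ψ => ψ
      | none => F

def msubst (σ : Pos → Option (Fml2 S V U)) (F : Fml2 S V U) : Fml2 S V U :=
  msubstAux σ [] F

def strictAbove (p q : Pos) : Prop := p <+: q ∧ p ≠ q

/-- q is a direct pos-child of p. -/
def dirChild (pos : Set Pos) (p q : Pos) : Prop :=
  q ∈ pos ∧ strictAbove p q ∧ ¬ ∃ r ∈ pos, strictAbove p r ∧ strictAbove r q

/-- The fresh Boolean variable a_q, as an atom. -/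
def boolAtom (q : Pos) : Fml2 S V U := .atom fun _ _ β => β q

open Classical in
/-- Substitution replacing every direct pos-child q of p by the Boolean
variable a_q. -/
noncomputable def childSub (pos : Set Pos) (p : Pos) : Pos → Option (Fml2 S V U) :=
  fun q => if dirChild pos p q then some (boolAtom q) else none

open Classical in
/-- The label φ_L(p) of the tree-interpolation encoding:
φ_L(root) = φ[q₁/a_{q₁},…,qₙ/a_{qₙ}], and for non-root p,
φ_L(p) = ¬a_p ∨ (φ[q₁/a_{q₁},…,qₙ/a_{qₙ}])↓p, the qᵢ being the direct
pos-children of p. -/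
noncomputable def phiL (φ : Fml2 S V U) (pos : Set Pos) (p : Pos) : Fml2 S V U :=
  if p = [] then msubst (childSub pos p) φ
  else .or (.atom fun _ _ β => ¬ β p)
    ((subAt (msubst (childSub pos p) φ) p).getD .fls)

def height : Fml2 S V U → Nat
  | .and l r => max (height l) (height r) + 1
  | .or l r => max (height l) (height r) + 1
  | _ => 0

lemma subAt_nil (F : Fml2 S V U) : subAt F [] = some F := by
  cases F <;> rfl

lemma msubstAux_some {σ : Pos → Option (Fml2 S V U)} {cur : Pos} {ψ : Fml2 S V U}
    (hσ : σ cur = some ψ) (F : Fml2 S V U) : msubstAux σ cur F = ψ := by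
  cases F <;> simp [msubstAux, hσ]

lemma msubstAux_none {σ : Pos → Option (Fml2 S V U)} {cur : Pos}
    (hσ : σ cur = none) (F : Fml2 S V U) :
    msubstAux σ cur F = match F with
      | .and l r => .and (msubstAux σ (cur ++ [true]) l) (msubstAux σ (cur ++ [false]) r)
      | .or l r => .or (msubstAux σ (cur ++ [true]) l) (msubstAux σ (cur ++ [false]) r)
      | F => F := by
  cases F <;> simp [msubstAux, hσ]

lemma length_le_height : ∀ (p : Pos) (F : Fml2 S V U), (subAt F p).isSome → p.length ≤ height F := by
  intro p
  induction p with
  | nil => intro F _; simp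
  | cons b p ih =>
    intro F h
    cases F with
    | and l r =>
      have := ih (if b then l else r) h
      cases b <;> simp at this <;> simp [height] <;> omega
    | or l r =>
      have := ih (if b then l else r) h
      cases b <;> simp at this <;> simp [height] <;> omega
    | atom f => simp [subAt] at h
    | tr => simp [subAt] at h
    | fls => simp [subAt] at h

lemma subAt_append : ∀ (p q : Pos) (F : Fml2 S V U),
    subAt F (p ++ q) = (subAt F p).bind (fun G => subAt G q) := by
  intro p
  induction p with
  | nil => intro q F; simp [subAt_nil]
  | cons b p ih =>
    intro q F
    cases F with
    | and l r => simp [subAt, ih]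
    | or l r => simp [subAt, ih]
    | atom f => simp [subAt]
    | tr => simp [subAt]
    | fls => simp [subAt]

lemma subAt_msubstAux (σ : Pos → Option (Fml2 S V U)) :
    ∀ (p cur : Pos) (F : Fml2 S V U), (∀ r, r <+: p → σ (cur ++ r) = none) →
      subAt (msubstAux σ cur F) p = (subAt F p).map (fun G => msubstAux σ (cur ++ p) G) := by
  intro p
  induction p with
  | nil =>
    intro cur F _
    simp [subAt_nil]
  | cons b p ih =>
    intro cur F h
    have hcur : σ cur = none := by
      have := h [] List.nil_prefix
      simpa using this
    have hrec : ∀ r, r <+: p → σ ((cur ++ [b]) ++ r) = none := by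
      intro r hr
      have := h (b :: r) (List.cons_prefix_cons.mpr ⟨rfl, hr⟩)
      simpa using this
    rw [msubstAux_none hcur]
    cases F with
    | and l r =>
      cases b with
      | true => simp [subAt, ih _ _ hrec]
      | false => simp [subAt, ih _ _ hrec]
    | or l r =>
      cases b with
      | true => simp [subAt, ih _ _ hrec]
      | false => simp [subAt, ih _ _ hrec]
    | atom f => simp [subAt]
    | tr => simp [subAt]
    | fls => simp [subAt]

lemma eval_msubstAux (σ : Pos → Option (Fml2 S V U)) (s : S) (α : V → U s) (β : Pos → Prop) :
    ∀ (F : Fml2 S V U) (cur : Pos),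
      (∀ q ψ, σ (cur ++ q) = some ψ → eval2 ψ s α β →
        ∃ G, subAt F q = some G ∧ eval2 G s α β) →
      eval2 (msubstAux σ cur F) s α β → eval2 F s α β := by
  intro F
  induction F with
  | and l r ihl ihr =>
    intro cur h he
    cases hσ : σ cur with
    | some ψ =>
      rw [msubstAux_some hσ] at he
      obtain ⟨G, hG, hGe⟩ := h [] ψ (by simpa using hσ) he
      rw [subAt_nil] at hG
      cases hG; exact hGe
    | none =>
      rw [msubstAux_none hσ] at he
      obtain ⟨hel, her⟩ := he
      constructor
      · exact ihl (cur ++ [true]) (fun q ψ hq hψ => by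
          have := h (true :: q) ψ (by simpa using hq) hψ
          simpa [subAt] using this) hel
      · exact ihr (cur ++ [false]) (fun q ψ hq hψ => by
          have := h (false :: q) ψ (by simpa using hq) hψ
          simpa [subAt] using this) her
  | or l r ihl ihr =>
    intro cur h he
    cases hσ : σ cur with
    | some ψ =>
      rw [msubstAux_some hσ] at he
      obtain ⟨G, hG, hGe⟩ := h [] ψ (by simpa using hσ) he
      rw [subAt_nil] at hG
      cases hG; exact hGe
    | none =>
      rw [msubstAux_none hσ] at he
      cases he with
      | inl hel => exact Or.inl (ihl (cur ++ [true]) (fun q ψ hq hψ => by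
          have := h (true :: q) ψ (by simpa using hq) hψ
          simpa [subAt] using this) hel)
      | inr her => exact Or.inr (ihr (cur ++ [false]) (fun q ψ hq hψ => by
          have := h (false :: q) ψ (by simpa using hq) hψ
          simpa [subAt] using this) her)
  | atom f =>
    intro cur h he
    cases hσ : σ cur with
    | some ψ =>
      rw [msubstAux_some hσ] at he
      obtain ⟨G, hG, hGe⟩ := h [] ψ (by simpa using hσ) he
      rw [subAt_nil] at hG
      cases hG; exact hGe
    | none => rwa [msubstAux_none hσ] at he
  | tr => intro cur h he; trivial
  | fls =>
    intro cur h he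
    cases hσ : σ cur with
    | some ψ =>
      rw [msubstAux_some hσ] at he
      obtain ⟨G, hG, hGe⟩ := h [] ψ (by simpa using hσ) he
      rw [subAt_nil] at hG
      cases hG; exact hGe
    | none => rwa [msubstAux_none hσ] at he


/-- for the tree-interpolation problem encoded from a
disjunctive interpolation problem (φ, pos) via fresh Boolean variables a_p,
the conjunction ⋀_{p ∈ pos} φ_L(p) is unsatisfiable whenever φ is
unsatisfiable. -/
theorem stmt19 (φ : Fml2 S V U) (pos : Set Pos)
    (hroot : [] ∈ pos)
    (hvalid : ∀ p ∈ pos, (subAt φ p).isSome)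
    (hunsat : ∀ (s : S) (α : V → U s) (β : Pos → Prop), ¬ eval2 φ s α β) :
    ∀ (s : S) (α : V → U s) (β : Pos → Prop),
      ¬ ∀ p ∈ pos, eval2 (phiL φ pos p) s α β := by
  intro s α β hall
  classical
  have hlt : ∀ p q : Pos, strictAbove p q → p.length < q.length := by
    intro p q ⟨hpre, hne⟩
    have h1 := hpre.length_le
    have h2 : p.length ≠ q.length := fun h => hne (List.IsPrefix.eq_of_length hpre h)
    omega
  have key : ∀ (n : ℕ) (p : Pos), p ∈ pos → height φ + 1 - p.length ≤ n →
      (p = [] ∨ β p) → ∃ G, subAt φ p = some G ∧ eval2 G s α β := by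
    intro n
    induction n with
    | zero =>
      intro p hp hlen _
      have := length_le_height p φ (hvalid p hp)
      omega
    | succ n ih =>
      intro p hp hlen hβ
      have hlenp := length_le_height p φ (hvalid p hp)
      -- the generic monotonicity condition
      have cond : ∀ (G : Fml2 S V U), subAt φ p = some G →
          ∀ q ψ, childSub (S := S) (V := V) (U := U) pos p (p ++ q) = some ψ →
            eval2 ψ s α β → ∃ G', subAt G q = some G' ∧ eval2 G' s α β := by
        intro G hG q ψ hσ hψ
        unfold childSub at hσ
        by_cases hd : dirChild pos p (p ++ q)
        · rw [if_pos hd] at hσ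
          cases hσ
          have hβq : β (p ++ q) := hψ
          obtain ⟨hqpos, hsa, _⟩ := hd
          have hlq := hlt _ _ hsa
          obtain ⟨G', hG', he'⟩ := ih (p ++ q) hqpos (by
            simp at hlq ⊢
            omega) (Or.inr hβq)
          rw [subAt_append, hG] at hG'
          exact ⟨G', hG', he'⟩
        · rw [if_neg hd] at hσ; exact absurd hσ (by simp)
      have hnone : ∀ r : Pos, r <+: p →
          childSub (S := S) (V := V) (U := U) pos p r = none := by
        intro r hr
        unfold childSub
        rw [if_neg]
        rintro ⟨_, ⟨hpr, hne⟩, _⟩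
        exact hne (List.IsPrefix.eq_of_length hpr
          (le_antisymm hpr.length_le hr.length_le))
      rcases hβ with hnil | hβp
      · subst hnil
        have hroot' := hall [] hroot
        rw [phiL, if_pos rfl] at hroot'
        have := eval_msubstAux (childSub pos []) s α β φ []
          (fun q ψ hσ hψ => cond φ (subAt_nil φ) q ψ (by simpa using hσ) hψ) hroot'
        exact ⟨φ, subAt_nil φ, this⟩
      · obtain ⟨G, hG⟩ := Option.isSome_iff_exists.mp (hvalid p hp)
        by_cases hpnil : p = []
        · subst hpnil
          rw [subAt_nil] at hG
          cases hG
          have hroot' := hall [] hroot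
          rw [phiL, if_pos rfl] at hroot'
          have := eval_msubstAux (childSub pos []) s α β φ []
            (fun q ψ hσ hψ => cond φ (subAt_nil φ) q ψ (by simpa using hσ) hψ) hroot'
          exact ⟨φ, subAt_nil φ, this⟩
        · have hp' := hall p hp
          rw [phiL, if_neg hpnil] at hp'
          have he : eval2 ((subAt (msubst (childSub pos p) φ) p).getD .fls) s α β := by
            cases hp' with
            | inl h => exact absurd hβp h
            | inr h => exact h
          have hsub : subAt (msubst (childSub pos p) φ) p
              = some (msubstAux (childSub pos p) p G) := by
            rw [msubst, subAt_msubstAux _ p [] φ (fun r hr => hnone r hr), hG]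
            simp
          rw [hsub] at he
          simp only [Option.getD_some] at he
          have := eval_msubstAux (childSub pos p) s α β G p (cond G hG) he
          exact ⟨G, hG, this⟩
  obtain ⟨G, hG, he⟩ := key (height φ + 1) [] hroot (by simp) (Or.inl rfl)
  rw [subAt_nil] at hG
  cases hG
  exact hunsat s α β he

end Stmt19
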